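/- arXiv:2110.03685 — 2 statements merged into one kernel-verified Lean document; each statement's English description precedes it below -/
import Mathlib

section
/- Define the adjusted operator D := [B,[A,B]] for the integrable kinetic energy K(q,p) = Σ_{i,j} a_{ij}(q) pᵢ pⱼ + Σᵢ bᵢ(q) pᵢ and smooth potential V. Then for every index i, D applied to the coordinate functions satisfies D qᵢ = 0 and D pᵢ (q,p) = Σ_{j,k} ( 2 V_{qᵢqⱼ}(q) V_{q_k}(q) K_{pⱼp_k}(q,p) + V_{qⱼ}(q) V_{q_k}(q) K_{qᵢpⱼp_k}(q,p) ); that is, D equals 2 B∘A∘B − B∘B∘A on coordinate functions and is a momentum-version operator. -/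
open scoped BigOperators

/-- Partial derivative with respect to the coordinate `qᵢ` of a function on phase space. -/
noncomputable def pder_q {n : ℕ} (F : (Fin n → ℝ) × (Fin n → ℝ) → ℝ)
    (i : Fin n) (z : (Fin n → ℝ) × (Fin n → ℝ)) : ℝ :=
  fderiv ℝ F z (Pi.single i 1, 0)

/-- Partial derivative with respect to the momentum `pᵢ` of a function on phase space. -/
noncomputable def pder_p {n : ℕ} (F : (Fin n → ℝ) × (Fin n → ℝ) → ℝ)
    (i : Fin n) (z : (Fin n → ℝ) × (Fin n → ℝ)) : ℝ :=
  fderiv ℝ F z (0, Pi.single i 1)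

/-- The integrable kinetic energy `K(q,p) = Σ_{i,j} a_{ij}(q) pᵢ pⱼ + Σᵢ bᵢ(q) pᵢ`. -/
noncomputable def Kfun {n : ℕ} (a : Fin n → Fin n → (Fin n → ℝ) → ℝ)
    (b : Fin n → (Fin n → ℝ) → ℝ) (z : (Fin n → ℝ) × (Fin n → ℝ)) : ℝ :=
  (∑ i, ∑ j, a i j z.1 * z.2 i * z.2 j) + ∑ i, b i z.1 * z.2 i

/-- The operator `A F = Σᵢ (K_{pᵢ} ∂F/∂qᵢ − K_{qᵢ} ∂F/∂pᵢ)` associated with `K`. -/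
noncomputable def opA {n : ℕ} (a : Fin n → Fin n → (Fin n → ℝ) → ℝ)
    (b : Fin n → (Fin n → ℝ) → ℝ) (F : (Fin n → ℝ) × (Fin n → ℝ) → ℝ) :
    (Fin n → ℝ) × (Fin n → ℝ) → ℝ :=
  fun z => ∑ i, (pder_p (Kfun a b) i z * pder_q F i z - pder_q (Kfun a b) i z * pder_p F i z)

/-- The operator `B F = −Σᵢ V_{qᵢ} ∂F/∂pᵢ`, associated with the potential `V`. -/
noncomputable def opB {n : ℕ} (V : (Fin n → ℝ) → ℝ)
    (F : (Fin n → ℝ) × (Fin n → ℝ) → ℝ) :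
    (Fin n → ℝ) × (Fin n → ℝ) → ℝ :=
  fun z => -∑ i, fderiv ℝ V z.1 (Pi.single i 1) * pder_p F i z

/-- Second partial derivative `K_{pⱼp_k} = ∂²K/∂pⱼ∂p_k`. -/
noncomputable def Kpp {n : ℕ} (a : Fin n → Fin n → (Fin n → ℝ) → ℝ)
    (b : Fin n → (Fin n → ℝ) → ℝ) (j k : Fin n)
    (z : (Fin n → ℝ) × (Fin n → ℝ)) : ℝ :=
  fderiv ℝ (fun w => pder_p (Kfun a b) k w) z (0, Pi.single j 1)

/-- Third partial derivative `K_{qᵢpⱼp_k} = ∂³K/∂qᵢ∂pⱼ∂p_k`. -/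
noncomputable def Kqpp {n : ℕ} (a : Fin n → Fin n → (Fin n → ℝ) → ℝ)
    (b : Fin n → (Fin n → ℝ) → ℝ) (i j k : Fin n)
    (z : (Fin n → ℝ) × (Fin n → ℝ)) : ℝ :=
  fderiv ℝ (fun w => Kpp a b j k w) z (Pi.single i 1, 0)

/-- Second partial derivative `V_{qᵢqⱼ} = ∂²V/∂qᵢ∂qⱼ`. -/
noncomputable def Vqq {n : ℕ} (V : (Fin n → ℝ) → ℝ) (i j : Fin n) (q : Fin n → ℝ) : ℝ :=
  fderiv ℝ (fun q' => fderiv ℝ V q' (Pi.single j 1)) q (Pi.single i 1)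

/-- The commutator `[A,B] = A∘B − B∘A`. -/
noncomputable def commAB {n : ℕ} (a : Fin n → Fin n → (Fin n → ℝ) → ℝ)
    (b : Fin n → (Fin n → ℝ) → ℝ) (V : (Fin n → ℝ) → ℝ)
    (F : (Fin n → ℝ) × (Fin n → ℝ) → ℝ) :
    (Fin n → ℝ) × (Fin n → ℝ) → ℝ :=
  fun z => opA a b (opB V F) z - opB V (opA a b F) z

/-- The adjusted operator `D = [B,[A,B]] = B∘[A,B] − [A,B]∘B`. -/
noncomputable def opD {n : ℕ} (a : Fin n → Fin n → (Fin n → ℝ) → ℝ)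
    (b : Fin n → (Fin n → ℝ) → ℝ) (V : (Fin n → ℝ) → ℝ)
    (F : (Fin n → ℝ) × (Fin n → ℝ) → ℝ) :
    (Fin n → ℝ) × (Fin n → ℝ) → ℝ :=
  fun z => opB V (commAB a b V F) z - commAB a b V (opB V F) z

open scoped ContDiff

/-!
`B` is differentiation along the vector field `(0, -∇V(q))`, so it annihilates functions of `q`
alone and `B² = Σ_{j,k} V_{qⱼ} V_{q_k} ∂_{pⱼ}∂_{p_k}`. Both `B qᵢ = 0` and `B pᵢ = -V_{qᵢ}` depend
on `q` only, hence `B²` kills the coordinate functions and expanding the double commutator leaves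
`D = 2 B∘A∘B − B∘B∘A` on them. For `pᵢ` we have `A pᵢ = −K_{qᵢ}` and `B∘A∘B pᵢ` is a contraction
of `V_{qq}`, `∇V` and `K_{pp}`; the stated formula follows from the symmetry of mixed partials of
`V` and `K`. For `qᵢ` we have `A qᵢ = K_{pᵢ}`, and `B²K_{pᵢ}` involves third momentum derivatives
of `K`, which vanish because `K` is quadratic in `p`.
-/

theorem fderiv_fderiv_apply_comm {E F : Type*} [NormedAddCommGroup E] [NormedSpace ℝ E]
    [NormedAddCommGroup F] [NormedSpace ℝ F] {f : E → F} {z : E} (hf : ContDiffAt ℝ 2 f z)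
    (u v : E) :
    fderiv ℝ (fun w => fderiv ℝ f w v) z u = fderiv ℝ (fun w => fderiv ℝ f w u) z v := by
  have hd : DifferentiableAt ℝ (fderiv ℝ f) z :=
    (hf.fderiv_right (m := 1) le_rfl).differentiableAt one_ne_zero
  rw [fderiv_clm_apply hd (differentiableAt_const v), fderiv_clm_apply hd (differentiableAt_const u)]
  simpa using (hf.isSymmSndFDerivAt (by simp)) u v

abbrev PhaseSpace (n : ℕ) := (Fin n → ℝ) × (Fin n → ℝ)

noncomputable def pder {n : ℕ} (g : (Fin n → ℝ) → ℝ) (k : Fin n) (q : Fin n → ℝ) : ℝ :=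
  fderiv ℝ g q (Pi.single k 1)

section PartialDerivatives

variable {n : ℕ} {F G : PhaseSpace n → ℝ} {g : (Fin n → ℝ) → ℝ} {z : PhaseSpace n}
  {i j k : Fin n}

lemma pder_p_neg : pder_p (fun w => -F w) k z = -pder_p F k z := by
  simp [pder_p, fderiv_fun_neg]

lemma pder_p_add (hF : DifferentiableAt ℝ F z) (hG : DifferentiableAt ℝ G z) :
    pder_p (fun w => F w + G w) k z = pder_p F k z + pder_p G k z := by
  simp [pder_p, fderiv_fun_add hF hG]

lemma pder_p_sub (hF : DifferentiableAt ℝ F z) (hG : DifferentiableAt ℝ G z) :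
    pder_p (fun w => F w - G w) k z = pder_p F k z - pder_p G k z := by
  simp [pder_p, fderiv_fun_sub hF hG]

lemma pder_p_mul (hF : DifferentiableAt ℝ F z) (hG : DifferentiableAt ℝ G z) :
    pder_p (fun w => F w * G w) k z = F z * pder_p G k z + G z * pder_p F k z := by
  simp [pder_p, fderiv_fun_mul hF hG]

lemma pder_p_sum {ι : Type*} (s : Finset ι) {F : ι → PhaseSpace n → ℝ}
    (hF : ∀ i ∈ s, DifferentiableAt ℝ (F i) z) :
    pder_p (fun w => ∑ i ∈ s, F i w) k z = ∑ i ∈ s, pder_p (F i) k z := by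
  simp [pder_p, fderiv_fun_sum hF]

lemma fderiv_comp_fst_apply (hg : DifferentiableAt ℝ g z.1) (u v : Fin n → ℝ) :
    fderiv ℝ (fun w : PhaseSpace n => g w.1) z (u, v) = fderiv ℝ g z.1 u := by
  rw [fderiv_fun_comp z hg differentiableAt_fst, fderiv_fst]
  rfl

lemma pder_p_comp_fst (hg : DifferentiableAt ℝ g z.1) : pder_p (fun w => g w.1) k z = 0 := by
  simp [pder_p, fderiv_comp_fst_apply hg]

lemma pder_q_comp_fst (hg : DifferentiableAt ℝ g z.1) :
    pder_q (fun w => g w.1) k z = pder g k z.1 :=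
  fderiv_comp_fst_apply hg _ _

lemma fderiv_fst_apply_apply (u v : Fin n → ℝ) :
    fderiv ℝ (fun w : PhaseSpace n => w.1 i) z (u, v) = u i := by
  rw [fderiv_apply (Φ := Prod.fst) differentiableAt_fst i, fderiv_fst]
  rfl

lemma fderiv_snd_apply_apply (u v : Fin n → ℝ) :
    fderiv ℝ (fun w : PhaseSpace n => w.2 i) z (u, v) = v i := by
  rw [fderiv_apply (Φ := Prod.snd) differentiableAt_snd i, fderiv_snd]
  rfl

lemma pder_q_fst : pder_q (fun w : PhaseSpace n => w.1 i) k z = (Pi.single k 1 : Fin n → ℝ) i :=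
  fderiv_fst_apply_apply _ _

lemma pder_p_fst : pder_p (fun w : PhaseSpace n => w.1 i) k z = 0 := by
  simp [pder_p, fderiv_fst_apply_apply]

lemma pder_q_snd : pder_q (fun w : PhaseSpace n => w.2 i) k z = 0 := by
  simp [pder_q, fderiv_snd_apply_apply]

lemma pder_p_snd : pder_p (fun w : PhaseSpace n => w.2 i) k z = (Pi.single k 1 : Fin n → ℝ) i :=
  fderiv_snd_apply_apply _ _

lemma ContDiff.pder (hg : ContDiff ℝ ∞ g) (k : Fin n) : ContDiff ℝ ∞ (pder g k) :=
  (hg.fderiv_right le_rfl).clm_apply contDiff_const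

lemma ContDiff.pder_p (hF : ContDiff ℝ ∞ F) (k : Fin n) : ContDiff ℝ ∞ (pder_p F k) :=
  (hF.fderiv_right le_rfl).clm_apply contDiff_const

lemma ContDiff.pder_q (hF : ContDiff ℝ ∞ F) (k : Fin n) : ContDiff ℝ ∞ (pder_q F k) :=
  (hF.fderiv_right le_rfl).clm_apply contDiff_const

lemma Vqq_comm {V : (Fin n → ℝ) → ℝ} (hV : ContDiff ℝ ∞ V) (q : Fin n → ℝ) :
    Vqq V i j q = Vqq V j i q :=
  fderiv_fderiv_apply_comm (hV.contDiffAt.of_le (by norm_cast)) _ _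

lemma pder_p_pder_p_comm (hF : ContDiff ℝ ∞ F) : pder_p (pder_p F j) k = pder_p (pder_p F k) j :=
  funext fun _ => fderiv_fderiv_apply_comm (hF.contDiffAt.of_le (by norm_cast)) _ _

lemma pder_p_pder_q_comm (hF : ContDiff ℝ ∞ F) : pder_p (pder_q F i) j = pder_q (pder_p F j) i :=
  funext fun _ => fderiv_fderiv_apply_comm (hF.contDiffAt.of_le (by norm_cast)) _ _

end PartialDerivatives

section Operators

variable {n : ℕ} {a : Fin n → Fin n → (Fin n → ℝ) → ℝ} {b : Fin n → (Fin n → ℝ) → ℝ}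
  {V : (Fin n → ℝ) → ℝ} {F G : PhaseSpace n → ℝ} {g : (Fin n → ℝ) → ℝ} {z : PhaseSpace n}
  {i : Fin n}

lemma contDiff_Kfun (ha : ∀ i j, ContDiff ℝ ∞ (a i j)) (hb : ∀ i, ContDiff ℝ ∞ (b i)) :
    ContDiff ℝ ∞ (Kfun a b) := by
  unfold Kfun
  fun_prop

lemma ContDiff.opA (hF : ContDiff ℝ ∞ F) (hK : ContDiff ℝ ∞ (Kfun a b)) :
    ContDiff ℝ ∞ (opA a b F) := by
  unfold _root_.opA
  have hKp := hK.pder_p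
  have hKq := hK.pder_q
  have hFp := hF.pder_p
  have hFq := hF.pder_q
  fun_prop

lemma ContDiff.opB (hF : ContDiff ℝ ∞ F) (hV : ContDiff ℝ ∞ V) : ContDiff ℝ ∞ (opB V F) := by
  unfold _root_.opB
  have hVq := fun i => (hV.pder i).comp (contDiff_fst (F := Fin n → ℝ))
  have hFp := hF.pder_p
  fun_prop

lemma opB_eq_sum_pder : opB V F = fun z => -∑ k, pder V k z.1 * pder_p F k z :=
  rfl

lemma opA_fun_zero : opA a b (fun _ => 0) = fun _ => 0 := by
  funext z
  simp [opA, pder_q, pder_p]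

lemma opB_fun_zero : opB V (fun _ => 0) = fun _ => 0 := by
  funext z
  simp [opB, pder_p]

lemma opB_neg : opB V (fun w => -F w) = fun z => -opB V F z := by
  funext z
  simp [opB, pder_p_neg]

lemma opB_sub (hF : DifferentiableAt ℝ F z) (hG : DifferentiableAt ℝ G z) :
    opB V (fun w => F w - G w) z = opB V F z - opB V G z := by
  simp only [opB, pder_p_sub hF hG, mul_sub, Finset.sum_sub_distrib]
  ring

lemma opB_comp_fst (hg : Differentiable ℝ g) : opB V (fun w => g w.1) = fun _ => 0 := by
  funext z
  simp [opB, pder_p_comp_fst (hg z.1)]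

lemma opB_fst : opB V (fun w => w.1 i) = fun _ => 0 := by
  funext z
  simp [opB, pder_p_fst]

lemma opB_snd : opB V (fun w => w.2 i) = fun z => -pder V i z.1 := by
  funext z
  simp [opB, pder_p_snd, Pi.single_apply, pder]

lemma opA_fst : opA a b (fun w => w.1 i) = pder_p (Kfun a b) i := by
  funext z
  simp [opA, pder_p_fst, pder_q_fst, Pi.single_apply]

lemma opA_snd : opA a b (fun w => w.2 i) = fun z => -pder_q (Kfun a b) i z := by
  funext z
  simp [opA, pder_p_snd, pder_q_snd, Pi.single_apply]

lemma opA_comp_fst (hg : Differentiable ℝ g) :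
    opA a b (fun w => g w.1) = fun z => ∑ k, pder_p (Kfun a b) k z * pder g k z.1 := by
  funext z
  simp [opA, pder_p_comp_fst (hg z.1), pder_q_comp_fst (hg z.1)]

end Operators

section SecondOrder

variable {n : ℕ} {a : Fin n → Fin n → (Fin n → ℝ) → ℝ} {b : Fin n → (Fin n → ℝ) → ℝ}
  {V : (Fin n → ℝ) → ℝ} {F : PhaseSpace n → ℝ} {g : (Fin n → ℝ) → ℝ} {z : PhaseSpace n}

lemma opB_opB (hV : ContDiff ℝ ∞ V) (hF : ContDiff ℝ ∞ F) :
    opB V (opB V F) z =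
      ∑ j, ∑ k, pder V j z.1 * pder V k z.1 * pder_p (pder_p F j) k z := by
  have hVq : ∀ j, DifferentiableAt ℝ (fun w : PhaseSpace n => pder V j w.1) z := fun j =>
    ((hV.pder j).differentiable (by simp) _).comp z differentiableAt_fst
  have hFp : ∀ j, DifferentiableAt ℝ (pder_p F j) z := fun j =>
    (hF.pder_p j).differentiable (by simp) _
  have hBF : ∀ k, pder_p (opB V F) k z = -∑ j, pder V j z.1 * pder_p (pder_p F j) k z := by
    intro k
    rw [opB_eq_sum_pder, pder_p_neg, pder_p_sum _ fun j _ => (hVq j).fun_mul (hFp j)]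
    simp only [pder_p_mul (hVq _) (hFp _), pder_p_comp_fst ((hV.pder _).differentiable (by simp) _)]
    simp [pder]
  rw [opB_eq_sum_pder]
  simp only [hBF, mul_neg, Finset.sum_neg_distrib, neg_neg, Finset.mul_sum]
  rw [Finset.sum_comm]
  exact Finset.sum_congr rfl fun j _ => Finset.sum_congr rfl fun k _ => by ring

lemma opB_opA_comp_fst (hK : ContDiff ℝ ∞ (Kfun a b)) (hg : ContDiff ℝ ∞ g) :
    opB V (opA a b (fun w => g w.1)) z =
      -∑ j, ∑ k, pder V j z.1 * Kpp a b j k z * pder g k z.1 := by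
  have hKp : ∀ k, DifferentiableAt ℝ (pder_p (Kfun a b) k) z := fun k =>
    (hK.pder_p k).differentiable (by simp) _
  have hgq : ∀ k, DifferentiableAt ℝ (pder g k) z.1 := fun k =>
    (hg.pder k).differentiable (by simp) _
  have hgq' : ∀ k, DifferentiableAt ℝ (fun w : PhaseSpace n => pder g k w.1) z := fun k =>
    (hgq k).comp z differentiableAt_fst
  have hAg : ∀ j, pder_p (opA a b (fun w => g w.1)) j z =
      ∑ k, Kpp a b j k z * pder g k z.1 := by
    intro j
    rw [opA_comp_fst (hg.differentiable (by simp)),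
      pder_p_sum _ fun k _ => (hKp k).fun_mul (hgq' k)]
    simp only [pder_p_mul (hKp _) (hgq' _), pder_p_comp_fst (hgq _), mul_zero, zero_add]
    exact Finset.sum_congr rfl fun k _ => mul_comm _ _
  simp only [opB_eq_sum_pder, hAg, Finset.mul_sum, mul_assoc]

end SecondOrder

section Kinetic

variable {n : ℕ} {a : Fin n → Fin n → (Fin n → ℝ) → ℝ} {b : Fin n → (Fin n → ℝ) → ℝ}
  {z : PhaseSpace n}

lemma pder_p_Kfun (ha : ∀ i j, Differentiable ℝ (a i j)) (hb : ∀ i, Differentiable ℝ (b i))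
    (k : Fin n) :
    pder_p (Kfun a b) k = fun z => ∑ m, (a k m z.1 + a m k z.1) * z.2 m + b k z.1 := by
  funext z
  unfold Kfun
  simp (disch := fun_prop) only [pder_p_add, pder_p_sum, pder_p_mul, pder_p_comp_fst, pder_p_snd]
  simp [Pi.single_apply, Finset.sum_add_distrib, add_mul, mul_comm, add_comm]

lemma Kpp_eq (ha : ∀ i j, Differentiable ℝ (a i j)) (hb : ∀ i, Differentiable ℝ (b i))
    (j k : Fin n) : Kpp a b j k = fun z => a k j z.1 + a j k z.1 := by
  funext z
  change pder_p (pder_p (Kfun a b) k) j z = _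
  rw [pder_p_Kfun ha hb]
  simp (disch := fun_prop) only [pder_p_add, pder_p_sum, pder_p_mul, pder_p_comp_fst, pder_p_snd]
  simp [Pi.single_apply]

lemma Kpp_comm (hK : ContDiff ℝ ∞ (Kfun a b)) (j k : Fin n) : Kpp a b j k = Kpp a b k j :=
  pder_p_pder_p_comm hK

lemma Kqpp_eq_pder_p_pder_p_pder_q (hK : ContDiff ℝ ∞ (Kfun a b)) (i j k : Fin n) :
    Kqpp a b i j k = pder_p (pder_p (pder_q (Kfun a b) i) j) k := by
  rw [pder_p_pder_q_comm hK, pder_p_pder_q_comm (hK.pder_p j), pder_p_pder_p_comm hK]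
  rfl

end Kinetic

section AdjustedOperator

variable {n : ℕ} {a : Fin n → Fin n → (Fin n → ℝ) → ℝ} {b : Fin n → (Fin n → ℝ) → ℝ}
  {V : (Fin n → ℝ) → ℝ} {F : PhaseSpace n → ℝ} {z : PhaseSpace n} {i : Fin n}

lemma opD_apply_of_opB_opB_eq_zero (hK : ContDiff ℝ ∞ (Kfun a b)) (hV : ContDiff ℝ ∞ V)
    (hF : ContDiff ℝ ∞ F) (hBB : opB V (opB V F) = fun _ => 0) :
    opD a b V F z =
      2 * opB V (opA a b (opB V F)) z - opB V (opB V (opA a b F)) z := by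
  have hABF := ((hF.opB hV).opA hK).differentiable (by simp) z
  have hBAF := ((hF.opA hK).opB hV).differentiable (by simp) z
  unfold opD commAB
  rw [opB_sub hABF hBAF, hBB, opA_fun_zero]
  ring

lemma opB_opB_opA_fst (ha : ∀ i j, ContDiff ℝ ∞ (a i j)) (hb : ∀ i, ContDiff ℝ ∞ (b i))
    (hV : ContDiff ℝ ∞ V) : opB V (opB V (opA a b (fun w => w.1 i))) z = 0 := by
  have ha' := fun i j => (ha i j).differentiable (by simp)
  rw [opA_fst, opB_opB hV ((contDiff_Kfun ha hb).pder_p i)]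
  refine Finset.sum_eq_zero fun j _ => Finset.sum_eq_zero fun k _ => ?_
  change _ * pder_p (Kpp a b j i) k z = 0
  rw [Kpp_eq ha' fun i => (hb i).differentiable (by simp),
    pder_p_comp_fst (g := fun q => a i j q + a j i q) (by fun_prop), mul_zero]

lemma opB_opB_opA_snd (hK : ContDiff ℝ ∞ (Kfun a b)) (hV : ContDiff ℝ ∞ V) :
    opB V (opB V (opA a b (fun w => w.2 i))) z =
      -∑ j, ∑ k, pder V j z.1 * pder V k z.1 * Kqpp a b i j k z := by
  simp only [opA_snd, opB_neg]
  rw [opB_opB hV (hK.pder_q i)]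
  simp only [Kqpp_eq_pder_p_pder_p_pder_q hK]

lemma opB_opA_opB_snd (hK : ContDiff ℝ ∞ (Kfun a b)) (hV : ContDiff ℝ ∞ V) :
    opB V (opA a b (opB V (fun w => w.2 i))) z =
      ∑ j, ∑ k, Vqq V i j z.1 * pder V k z.1 * Kpp a b j k z := by
  rw [opB_snd, opB_opA_comp_fst (g := fun q => -pder V i q) hK (hV.pder i).neg]
  have hVqq : ∀ k q, pder (fun q => -pder V i q) k q = -Vqq V k i q := fun k q => by
    simp [pder, fderiv_fun_neg, Vqq]
  simp only [hVqq, mul_neg, Finset.sum_neg_distrib, neg_neg]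
  rw [Finset.sum_comm]
  refine Finset.sum_congr rfl fun j _ => Finset.sum_congr rfl fun k _ => ?_
  rw [Kpp_comm hK k j, Vqq_comm hV]
  ring

end AdjustedOperator

/-- `D qᵢ = 0` and
`D pᵢ(q,p) = Σ_{j,k} (2 V_{qᵢqⱼ} V_{q_k} K_{pⱼp_k} + V_{qⱼ} V_{q_k} K_{qᵢpⱼp_k})`;
moreover `D` agrees with `2 B∘A∘B − B∘B∘A` on the coordinate functions `pᵢ`, hence is a
momentum-version operator. -/
theorem adjusted_operator_D {n : ℕ} (a : Fin n → Fin n → (Fin n → ℝ) → ℝ)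
    (b : Fin n → (Fin n → ℝ) → ℝ) (V : (Fin n → ℝ) → ℝ)
    (ha : ∀ i j, ContDiff ℝ (⊤ : ℕ∞) (a i j)) (hb : ∀ i, ContDiff ℝ (⊤ : ℕ∞) (b i))
    (hV : ContDiff ℝ (⊤ : ℕ∞) V) (i : Fin n) (q p : Fin n → ℝ) :
    opD a b V (fun w => w.1 i) (q, p) = 0 ∧
    opD a b V (fun w => w.2 i) (q, p) =
      ∑ j, ∑ k, (2 * Vqq V i j q * fderiv ℝ V q (Pi.single k 1) * Kpp a b j k (q, p) +
        fderiv ℝ V q (Pi.single j 1) * fderiv ℝ V q (Pi.single k 1) *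
          Kqpp a b i j k (q, p)) ∧
    opD a b V (fun w => w.2 i) (q, p) =
      2 * opB V (opA a b (opB V (fun w => w.2 i))) (q, p) -
        opB V (opB V (opA a b (fun w => w.2 i))) (q, p) := by
  have hK := contDiff_Kfun ha hb
  have hBBq : opB V (opB V (fun w => w.1 i)) = fun _ => 0 := by rw [opB_fst, opB_fun_zero]
  have hBBp : opB V (opB V (fun w => w.2 i)) = fun _ => 0 := by
    rw [opB_snd]
    exact opB_comp_fst ((hV.pder i).neg.differentiable (by simp))
  have hDq := opD_apply_of_opB_opB_eq_zero (z := (q, p)) hK hV (by fun_prop) hBBq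
  have hDp := opD_apply_of_opB_opB_eq_zero (z := (q, p)) hK hV (by fun_prop) hBBp
  refine ⟨?_, ?_, hDp⟩
  · rw [hDq, opB_fst, opA_fun_zero, opB_fun_zero, opB_opB_opA_fst ha hb hV]
    simp
  · rw [hDp, opB_opA_opB_snd hK hV, opB_opB_opA_snd hK hV, Finset.mul_sum, sub_neg_eq_add,
      ← Finset.sum_add_distrib]
    refine Finset.sum_congr rfl fun j _ => ?_
    rw [Finset.mul_sum, ← Finset.sum_add_distrib]
    exact Finset.sum_congr rfl fun k _ => by simp only [pder]; ring
end

section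
/- Assume a_{ij} = a_{ji} for all i,j, and let τ be any real number. Then for every index i, the operator B + (τ²/24) D applied to the coordinate function pᵢ equals −∂/∂qᵢ of the modified potential V_{N2}(q) := V(q) − (τ²/12) Σ_{j,k} a_{jk}(q) V_{qⱼ}(q) V_{q_k}(q). Hence B + (τ²/24) D is the momentum-version Lie operator of V_{N2}, so the extended scheme N2 is a symplectic splitting scheme for the modified Hamiltonian J_{N2} = K + V_{N2}. -/
/-!
Every phase-space function met while expanding `D pᵢ = B [A,B] pᵢ - [A,B] B pᵢ` is a polynomial of
degree at most two in the momenta with smooth coefficients in `q` (`quadInP`). On such functions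
`B` lowers the degree in `p` by one and kills functions of `q` alone, while `A` turns a function of
`q` into one affine in `p`. Hence `B pᵢ = -V_{qᵢ}`, `[A,B] pᵢ` is affine in `p`, and `D pᵢ` is an
explicit function of `q`. For symmetric `a` and by Schwarz's theorem it equals
`2 ∂/∂qᵢ Σ_{j,k} a_{jk} V_{qⱼ} V_{q_k}`, which is exactly what makes
`B pᵢ + (τ²/24) D pᵢ = -∂V_{N2}/∂qᵢ`.
-/

open scoped BigOperators

/-- The modified potential `V_{N2}(q) = V(q) − (τ²/12) Σ_{j,k} a_{jk}(q) V_{qⱼ}(q) V_{q_k}(q)`. -/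
noncomputable def VN2 {n : ℕ} (a : Fin n → Fin n → (Fin n → ℝ) → ℝ)
    (V : (Fin n → ℝ) → ℝ) (τ : ℝ) (q : Fin n → ℝ) : ℝ :=
  V q - (τ ^ 2 / 12) *
    ∑ j, ∑ k, a j k q * fderiv ℝ V q (Pi.single j 1) * fderiv ℝ V q (Pi.single k 1)

namespace ModifiedPotential

open ContinuousLinearMap

variable {n : ℕ}

noncomputable def qderiv (f : (Fin n → ℝ) → ℝ) (i : Fin n) (q : Fin n → ℝ) : ℝ :=
  fderiv ℝ f q (Pi.single i 1)

theorem qderiv_neg (f : (Fin n → ℝ) → ℝ) (i : Fin n) (q : Fin n → ℝ) :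
    qderiv (fun q' => -f q') i q = -qderiv f i q := by
  simp [qderiv]

@[fun_prop]
theorem contDiff_qderiv {f : (Fin n → ℝ) → ℝ} (hf : ContDiff ℝ (⊤ : ℕ∞) f) (i : Fin n) :
    ContDiff ℝ (⊤ : ℕ∞) (qderiv f i) :=
  (hf.fderiv_right (m := ((⊤ : ℕ∞) : WithTop ℕ∞)) le_rfl).clm_apply contDiff_const

theorem qderiv_qderiv_comm {f : (Fin n → ℝ) → ℝ} (hf : ContDiff ℝ 2 f) (i j : Fin n)
    (q : Fin n → ℝ) :
    qderiv (qderiv f j) i q = qderiv (qderiv f i) j q := by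
  have hd : DifferentiableAt ℝ (fderiv ℝ f) q :=
    ((hf.fderiv_right (m := 1) le_rfl).differentiable one_ne_zero).differentiableAt
  have h : ∀ k u, fderiv ℝ (qderiv f k) q u = fderiv ℝ (fderiv ℝ f) q u (Pi.single k 1) := by
    intro k u
    change fderiv ℝ (fun q' => fderiv ℝ f q' (Pi.single k 1)) q u = _
    rw [fderiv_clm_apply hd (differentiableAt_const _)]
    simp
  rw [qderiv, qderiv, h, h]
  exact (hf.contDiffAt.isSymmSndFDerivAt (by simp)) _ _

abbrev PhaseSpace (n : ℕ) : Type := (Fin n → ℝ) × (Fin n → ℝ)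

theorem hasFDerivAt_momentum (j : Fin n) (z : PhaseSpace n) :
    HasFDerivAt (fun w : PhaseSpace n => w.2 j) ((proj j).comp (snd ℝ _ _)) z :=
  ((proj j).comp (snd ℝ (Fin n → ℝ) (Fin n → ℝ))).hasFDerivAt

theorem hasFDerivAt_comp_fst {f : (Fin n → ℝ) → ℝ} {z : PhaseSpace n}
    (hf : DifferentiableAt ℝ f z.1) :
    HasFDerivAt (fun w : PhaseSpace n => f w.1) ((fderiv ℝ f z.1).comp (fst ℝ _ _)) z :=
  hf.hasFDerivAt.comp z hasFDerivAt_fst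

theorem pder_p_momentum (i j : Fin n) (z : PhaseSpace n) :
    pder_p (fun w => w.2 i) j z = if j = i then 1 else 0 := by
  simp [pder_p, (hasFDerivAt_momentum i z).fderiv, Pi.single_apply, eq_comm]

theorem pder_q_momentum (i j : Fin n) (z : PhaseSpace n) :
    pder_q (fun w => w.2 i) j z = 0 := by
  simp [pder_q, (hasFDerivAt_momentum i z).fderiv]

theorem pder_p_comp_fst {f : (Fin n → ℝ) → ℝ} {z : PhaseSpace n}
    (hf : DifferentiableAt ℝ f z.1) (j : Fin n) : pder_p (fun w => f w.1) j z = 0 := by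
  simp [pder_p, (hasFDerivAt_comp_fst hf).fderiv]

theorem pder_q_comp_fst {f : (Fin n → ℝ) → ℝ} {z : PhaseSpace n}
    (hf : DifferentiableAt ℝ f z.1) (j : Fin n) : pder_q (fun w => f w.1) j z = qderiv f j z.1 := by
  simp [pder_q, qderiv, (hasFDerivAt_comp_fst hf).fderiv]

noncomputable def quadInP (c : Fin n → Fin n → (Fin n → ℝ) → ℝ) (d : Fin n → (Fin n → ℝ) → ℝ)
    (e : (Fin n → ℝ) → ℝ) (z : PhaseSpace n) : ℝ :=
  (∑ j, ∑ k, c j k z.1 * z.2 j * z.2 k) + (∑ j, d j z.1 * z.2 j) + e z.1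

section QuadInP

variable {c : Fin n → Fin n → (Fin n → ℝ) → ℝ} {d : Fin n → (Fin n → ℝ) → ℝ}
  {e : (Fin n → ℝ) → ℝ} {z : PhaseSpace n}

theorem hasFDerivAt_quadInP (hc : ∀ j k, DifferentiableAt ℝ (c j k) z.1)
    (hd : ∀ j, DifferentiableAt ℝ (d j) z.1) (he : DifferentiableAt ℝ e z.1) :
    HasFDerivAt (quadInP c d e)
      ((∑ j, ∑ k, ((c j k z.1 * z.2 j) • ((proj k).comp (snd ℝ _ _))
          + z.2 k • (c j k z.1 • ((proj j).comp (snd ℝ _ _))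
            + z.2 j • (fderiv ℝ (c j k) z.1).comp (fst ℝ _ _))))
        + (∑ j, (d j z.1 • ((proj j).comp (snd ℝ _ _))
          + z.2 j • (fderiv ℝ (d j) z.1).comp (fst ℝ _ _)))
        + (fderiv ℝ e z.1).comp (fst ℝ _ _)) z := by
  have hfst {f : (Fin n → ℝ) → ℝ} (hf : DifferentiableAt ℝ f z.1) := hasFDerivAt_comp_fst hf
  have hp := (hasFDerivAt_momentum · z)
  exact ((HasFDerivAt.fun_sum fun j _ => HasFDerivAt.fun_sum fun k _ =>
      ((hfst (hc j k)).mul (hp j)).mul (hp k)).add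
    (HasFDerivAt.fun_sum fun j _ => (hfst (hd j)).mul (hp j))).add (hfst he)

theorem pder_p_quadInP (hc : ∀ j k, DifferentiableAt ℝ (c j k) z.1)
    (hd : ∀ j, DifferentiableAt ℝ (d j) z.1) (he : DifferentiableAt ℝ e z.1) (m : Fin n) :
    pder_p (quadInP c d e) m z = (∑ k, (c m k z.1 + c k m z.1) * z.2 k) + d m z.1 := by
  rw [pder_p, (hasFDerivAt_quadInP hc hd he).fderiv]
  simp [Pi.single_apply, Finset.sum_add_distrib, add_mul, mul_comm, add_comm]

theorem pder_q_quadInP (hc : ∀ j k, DifferentiableAt ℝ (c j k) z.1)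
    (hd : ∀ j, DifferentiableAt ℝ (d j) z.1) (he : DifferentiableAt ℝ e z.1) (i : Fin n) :
    pder_q (quadInP c d e) i z
      = quadInP (fun j k => qderiv (c j k) i) (fun j => qderiv (d j) i) (qderiv e i) z := by
  rw [pder_q, (hasFDerivAt_quadInP hc hd he).fderiv]
  simp [quadInP, qderiv, mul_comm, mul_left_comm]

end QuadInP

theorem quadInP_sub (c c' : Fin n → Fin n → (Fin n → ℝ) → ℝ) (d d' : Fin n → (Fin n → ℝ) → ℝ)
    (e e' : (Fin n → ℝ) → ℝ) :
    (fun z => quadInP c d e z - quadInP c' d' e' z) = quadInP (c - c') (d - d') (e - e') := by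
  ext; simp only [quadInP, Pi.sub_apply, sub_mul, Finset.sum_sub_distrib]; ring

theorem Kfun_eq_quadInP (a : Fin n → Fin n → (Fin n → ℝ) → ℝ) (b : Fin n → (Fin n → ℝ) → ℝ) :
    Kfun a b = quadInP a b 0 := by
  ext; simp [Kfun, quadInP]

theorem sum_mul_affine (u d p : Fin n → ℝ) (C : Fin n → Fin n → ℝ) :
    ∑ m, u m * ((∑ k, C m k * p k) + d m) = (∑ k, (∑ m, u m * C m k) * p k) + ∑ m, u m * d m := by
  simp only [mul_add, Finset.sum_add_distrib, Finset.mul_sum, Finset.sum_mul, mul_assoc]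
  rw [Finset.sum_comm]

theorem opB_momentum (W : (Fin n → ℝ) → ℝ) (i : Fin n) (z : PhaseSpace n) :
    opB W (fun w => w.2 i) z = -qderiv W i z.1 := by
  simp [opB, pder_p_momentum, qderiv]

theorem opB_comp_fst (V : (Fin n → ℝ) → ℝ) {f : (Fin n → ℝ) → ℝ} (hf : Differentiable ℝ f) :
    opB V (fun w => f w.1) = fun _ => 0 := by
  ext; simp [opB, pder_p_comp_fst (hf _)]

theorem opB_quadInP (V : (Fin n → ℝ) → ℝ) {c : Fin n → Fin n → (Fin n → ℝ) → ℝ}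
    {d : Fin n → (Fin n → ℝ) → ℝ} {e : (Fin n → ℝ) → ℝ} (hc : ∀ j k, Differentiable ℝ (c j k))
    (hd : ∀ j, Differentiable ℝ (d j)) (he : Differentiable ℝ e) :
    opB V (quadInP c d e) = quadInP 0 (fun k q => -∑ m, qderiv V m q * (c m k q + c k m q))
      (fun q => -∑ m, qderiv V m q * d m q) := by
  ext z
  simp only [opB, pder_p_quadInP (fun j k => hc j k _) (fun j => hd j _) (he _), sum_mul_affine]
  simp only [quadInP, qderiv, Pi.zero_apply, zero_mul, Finset.sum_const_zero, zero_add,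
    Finset.sum_neg_distrib, neg_mul]
  ring

section Kinetic

variable (a : Fin n → Fin n → (Fin n → ℝ) → ℝ) (b : Fin n → (Fin n → ℝ) → ℝ)

theorem pder_p_Kfun (ha : ∀ j k, Differentiable ℝ (a j k)) (hb : ∀ j, Differentiable ℝ (b j))
    (m : Fin n) (z : PhaseSpace n) :
    pder_p (Kfun a b) m z = (∑ k, (a m k z.1 + a k m z.1) * z.2 k) + b m z.1 := by
  rw [Kfun_eq_quadInP, pder_p_quadInP (fun j k => ha j k _) (fun j => hb j _)
    (differentiableAt_zero _)]

theorem opA_comp_fst (ha : ∀ j k, Differentiable ℝ (a j k)) (hb : ∀ j, Differentiable ℝ (b j))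
    {f : (Fin n → ℝ) → ℝ} (hf : Differentiable ℝ f) :
    opA a b (fun w => f w.1) = quadInP 0 (fun k q => ∑ j, (a j k q + a k j q) * qderiv f j q)
      (fun q => ∑ j, b j q * qderiv f j q) := by
  ext z
  simp only [opA, pder_p_comp_fst (hf _), mul_zero, sub_zero, pder_q_comp_fst (hf _)]
  simp only [mul_comm _ (qderiv f _ _), pder_p_Kfun a b ha hb, sum_mul_affine]
  simp [quadInP]

theorem opA_momentum (ha : ∀ j k, Differentiable ℝ (a j k)) (hb : ∀ j, Differentiable ℝ (b j))
    (i : Fin n) :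
    opA a b (fun w => w.2 i)
      = quadInP (fun j k => -qderiv (a j k) i) (fun j => -qderiv (b j) i) 0 := by
  ext z
  simp only [opA, pder_p_momentum, pder_q_momentum]
  rw [Kfun_eq_quadInP]
  simp [pder_q_quadInP (fun j k => ha j k _) (fun j => hb j _) (differentiableAt_zero _), quadInP,
    qderiv]
  ring

theorem opA_zero : opA a b (fun _ => 0) = fun _ => 0 := by
  ext; simp [opA, pder_q, pder_p]

end Kinetic

theorem opD_momentum_eq (a : Fin n → Fin n → (Fin n → ℝ) → ℝ) (b : Fin n → (Fin n → ℝ) → ℝ)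
    (V : (Fin n → ℝ) → ℝ) (ha : ∀ j k, ContDiff ℝ (⊤ : ℕ∞) (a j k))
    (hb : ∀ j, ContDiff ℝ (⊤ : ℕ∞) (b j)) (hV : ContDiff ℝ (⊤ : ℕ∞) V) (i : Fin n)
    (z : PhaseSpace n) :
    opD a b V (fun w => w.2 i) z = ∑ m, qderiv V m z.1 *
      (2 * ∑ j, (a j m z.1 + a m j z.1) * qderiv (qderiv V i) j z.1
        + ∑ k, qderiv V k z.1 * (qderiv (a k m) i z.1 + qderiv (a m k) i z.1)) := by
  have ha' (j k) : Differentiable ℝ (a j k) := (ha j k).differentiable (by simp)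
  have hb' (j) : Differentiable ℝ (b j) := (hb j).differentiable (by simp)
  have hB : opB V (fun w => w.2 i) = fun w => -qderiv V i w.1 := funext (opB_momentum V i)
  have hf : Differentiable ℝ (fun q => -qderiv V i q) := by fun_prop (disch := simp)
  unfold opD commAB
  rw [hB, opB_comp_fst V hf, opA_zero, opA_comp_fst a b ha' hb' hf,
    opA_momentum a b ha' hb', opB_quadInP V ?_ ?_ ?_, quadInP_sub, opB_quadInP V ?_ ?_ ?_,
    opB_quadInP V ?_ ?_ ?_]
  · simp only [quadInP, Pi.zero_apply, Pi.sub_apply, zero_mul, Finset.sum_const_zero, zero_add,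
      zero_sub, add_zero, mul_zero, neg_zero, neg_neg]
    rw [← Finset.sum_neg_distrib, ← Finset.sum_sub_distrib]
    refine Finset.sum_congr rfl fun m _ => ?_
    simp only [qderiv_neg, Pi.neg_apply, ← neg_add, mul_neg, Finset.sum_neg_distrib]
    ring
  all_goals
    intros
    try simp only [Pi.sub_apply, Pi.neg_apply, Pi.zero_apply]
    fun_prop (disch := simp)

noncomputable def gradNormSq (a : Fin n → Fin n → (Fin n → ℝ) → ℝ) (V : (Fin n → ℝ) → ℝ)
    (q : Fin n → ℝ) : ℝ :=
  ∑ j, ∑ k, a j k q * qderiv V j q * qderiv V k q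

theorem qderiv_gradNormSq {a : Fin n → Fin n → (Fin n → ℝ) → ℝ} {V : (Fin n → ℝ) → ℝ}
    {q : Fin n → ℝ} (ha : ∀ j k, DifferentiableAt ℝ (a j k) q)
    (hV : ∀ j, DifferentiableAt ℝ (qderiv V j) q) (i : Fin n) :
    qderiv (gradNormSq a V) i q
      = ∑ j, ∑ k, (qderiv (a j k) i q * qderiv V j q * qderiv V k q
          + a j k q * (qderiv (qderiv V j) i q * qderiv V k q
            + qderiv V j q * qderiv (qderiv V k) i q)) := by
  have H : HasFDerivAt (gradNormSq a V) _ q :=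
    HasFDerivAt.fun_sum fun j _ => HasFDerivAt.fun_sum fun k _ =>
      ((ha j k).hasFDerivAt.mul (hV j).hasFDerivAt).mul (hV k).hasFDerivAt
  rw [qderiv, H.fderiv]
  simp only [qderiv, sum_apply, add_apply, smul_apply, smul_eq_mul, Pi.mul_apply]
  exact Finset.sum_congr rfl fun j _ => Finset.sum_congr rfl fun k _ => by ring

theorem sum_mul_symm_eq (A D : Fin n → Fin n → ℝ) (v w : Fin n → ℝ)
    (hA : ∀ j k, A j k = A k j) (hD : ∀ j k, D j k = D k j) :
    ∑ m, v m * (2 * ∑ j, (A j m + A m j) * w j + ∑ k, v k * (D k m + D m k))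
      = 2 * ∑ j, ∑ k, (D j k * v j * v k + A j k * (w j * v k + v j * w k)) := by
  have hswap : ∑ j, ∑ k, A j k * (w j * v k) = ∑ j, ∑ k, A j k * (v j * w k) := by
    rw [Finset.sum_comm]
    exact Finset.sum_congr rfl fun j _ => Finset.sum_congr rfl fun k _ => by rw [hA]; ring
  calc _ = ∑ j, ∑ k, (4 * (A j k * (v j * w k)) + 2 * (D j k * v j * v k)) := by
        refine Finset.sum_congr rfl fun j _ => ?_
        simp only [mul_add, Finset.mul_sum, ← Finset.sum_add_distrib]
        exact Finset.sum_congr rfl fun k _ => by rw [hA k j, hD k j]; ring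
    _ = 2 * ((∑ j, ∑ k, D j k * v j * v k) + ((∑ j, ∑ k, A j k * (w j * v k))
          + ∑ j, ∑ k, A j k * (v j * w k))) := by
        simp only [Finset.sum_add_distrib, ← Finset.mul_sum, hswap]
        ring
    _ = _ := by simp only [mul_add, Finset.sum_add_distrib]

theorem opD_momentum_eq_two_mul_qderiv {a : Fin n → Fin n → (Fin n → ℝ) → ℝ}
    {b : Fin n → (Fin n → ℝ) → ℝ} {V : (Fin n → ℝ) → ℝ} (ha : ∀ j k, ContDiff ℝ (⊤ : ℕ∞) (a j k))
    (hb : ∀ j, ContDiff ℝ (⊤ : ℕ∞) (b j)) (hV : ContDiff ℝ (⊤ : ℕ∞) V)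
    (hsym : ∀ j k, a j k = a k j) (i : Fin n) (z : PhaseSpace n) :
    opD a b V (fun w => w.2 i) z = 2 * qderiv (gradNormSq a V) i z.1 := by
  have hschwarz (j : Fin n) : qderiv (qderiv V i) j z.1 = qderiv (qderiv V j) i z.1 :=
    qderiv_qderiv_comm (hV.of_le (WithTop.coe_le_coe.mpr le_top)) j i z.1
  rw [opD_momentum_eq a b V ha hb hV, qderiv_gradNormSq
    (fun j k => (ha j k).differentiable (by simp) _)
    (fun j => (contDiff_qderiv hV j).differentiable (by simp) _)]
  simp only [hschwarz]
  exact sum_mul_symm_eq (fun j k => a j k z.1) (fun j k => qderiv (a j k) i z.1)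
    (fun j => qderiv V j z.1) (fun j => qderiv (qderiv V j) i z.1)
    (fun j k => by rw [hsym]) (fun j k => by rw [hsym])

theorem qderiv_VN2 {a : Fin n → Fin n → (Fin n → ℝ) → ℝ} {V : (Fin n → ℝ) → ℝ} (τ : ℝ)
    {q : Fin n → ℝ} (ha : ∀ j k, DifferentiableAt ℝ (a j k) q) (hV : DifferentiableAt ℝ V q)
    (hV' : ∀ j, DifferentiableAt ℝ (qderiv V j) q) (i : Fin n) :
    qderiv (VN2 a V τ) i q = qderiv V i q - τ ^ 2 / 12 * qderiv (gradNormSq a V) i q := by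
  have hS : DifferentiableAt ℝ (gradNormSq a V) q := by
    unfold gradNormSq; fun_prop
  have H : HasFDerivAt (VN2 a V τ) _ q := hV.hasFDerivAt.fun_sub (hS.hasFDerivAt.const_mul _)
  rw [qderiv, H.fderiv]
  rfl

end ModifiedPotential

open ModifiedPotential in
/-- If `a_{jk} = a_{kj}`, then `(B + (τ²/24) D) pᵢ = −∂V_{N2}/∂qᵢ`: the operator
`B + (τ²/24) D` is the momentum-version Lie operator of the modified potential `V_{N2}`,
so the extended scheme N2 is a symplectic splitting scheme for the modified Hamiltonian
`J_{N2} = K + V_{N2}`. -/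
theorem modified_potential_N2 {n : ℕ} (a : Fin n → Fin n → (Fin n → ℝ) → ℝ)
    (b : Fin n → (Fin n → ℝ) → ℝ) (V : (Fin n → ℝ) → ℝ)
    (ha : ∀ i j, ContDiff ℝ (⊤ : ℕ∞) (a i j)) (hb : ∀ i, ContDiff ℝ (⊤ : ℕ∞) (b i))
    (hV : ContDiff ℝ (⊤ : ℕ∞) V) (hsym : ∀ i j, a i j = a j i)
    (τ : ℝ) (i : Fin n) (q p : Fin n → ℝ) :
    opB V (fun w => w.2 i) (q, p) + (τ ^ 2 / 24) * opD a b V (fun w => w.2 i) (q, p) =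
      -fderiv ℝ (VN2 a V τ) q (Pi.single i 1) ∧
    opB V (fun w => w.2 i) (q, p) + (τ ^ 2 / 24) * opD a b V (fun w => w.2 i) (q, p) =
      opB (VN2 a V τ) (fun w => w.2 i) (q, p) := by
  have hD := opD_momentum_eq_two_mul_qderiv ha hb hV hsym i (q, p)
  have hVN2 := qderiv_VN2 τ (fun j k => (ha j k).differentiable (by simp) q)
    (hV.differentiable (by simp) q) (fun j => (contDiff_qderiv hV j).differentiable (by simp) q) i
  have hN2 : opB V (fun w => w.2 i) (q, p) + (τ ^ 2 / 24) * opD a b V (fun w => w.2 i) (q, p)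
      = -qderiv (VN2 a V τ) i q := by
    rw [opB_momentum, hD, hVN2]
    ring
  exact ⟨hN2, hN2.trans (opB_momentum _ i (q, p)).symm⟩
end
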